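/- Over the complex scalars, let X be a Banach space of scalar sequences containing the canonical unit vectors e_n, and let Y be a strictly convex Banach space. If P ∈ P(^N X; Y) attains its norm at a point a ∈ B_X for which there exist n_0 ∈ ℕ and δ > 0 such that ‖a + λ e_n‖ ≤ 1 for all scalars λ with |λ| ≤ δ and all n ≥ n_0, then P(e_n) = 0 for all n ≥ n_0. -/

import Mathlib

noncomputable section

open NormedSpace Filter Topology Metric

/-- The dual (transpose) of a continuous linear operator between normed spaces. -/
def dualOp (𝕜 : Type*) [RCLike 𝕜] {E F : Type*} [NormedAddCommGroup E] [NormedSpace 𝕜 E]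
    [NormedAddCommGroup F] [NormedSpace 𝕜 F] (T : E →L[𝕜] F) :
    StrongDual 𝕜 F →L[𝕜] StrongDual 𝕜 E :=
  (ContinuousLinearMap.compL 𝕜 E F 𝕜).flip T

set_option maxSynthPendingDepth 3 in
/-- The canonical (Arens) extension of a continuous multilinear map `Φ : X × ⋯ × X → W`
to the bidual, evaluated at a point `xs` of the `N`-fold product of the bidual of `X`,
with values in the bidual of `W`.  It is obtained by extending one variable at a time,
the first variable being extended last (which corresponds to the iterated weak-star
limit `lim_{α₁} … lim_{α_N}`).  It is bundled as a continuous linear map in `Φ`. -/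
def arens (𝕜 : Type*) [RCLike 𝕜] (X W : Type*) [NormedAddCommGroup X] [NormedSpace 𝕜 X]
    [NormedAddCommGroup W] [NormedSpace 𝕜 W] :
    ∀ {N : ℕ}, (Fin N → StrongDual 𝕜 (StrongDual 𝕜 X)) →
      (ContinuousMultilinearMap 𝕜 (fun _ : Fin N => X) W →L[𝕜]
        StrongDual 𝕜 (StrongDual 𝕜 W))
  | 0, _ =>
      (NormedSpace.inclusionInDoubleDual 𝕜 W).comp
        ((continuousMultilinearCurryFin0 𝕜 X W).toContinuousLinearEquiv :
          ContinuousMultilinearMap 𝕜 (fun _ : Fin 0 => X) W ≃L[𝕜] W).toContinuousLinearMap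
  | (N + 1), xs =>
      ((ContinuousLinearMap.compL 𝕜 (StrongDual 𝕜 W) (StrongDual 𝕜 X) 𝕜 (xs 0)).comp
        (((ContinuousLinearMap.flipₗᵢ 𝕜 X (StrongDual 𝕜 W) 𝕜).toContinuousLinearEquiv :
            (X →L[𝕜] StrongDual 𝕜 (StrongDual 𝕜 W)) ≃L[𝕜]
              (StrongDual 𝕜 W →L[𝕜] StrongDual 𝕜 X)).toContinuousLinearMap.comp
          ((ContinuousLinearMap.compL 𝕜 X
              (ContinuousMultilinearMap 𝕜 (fun _ : Fin N => X) W)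
              (StrongDual 𝕜 (StrongDual 𝕜 W)) (arens 𝕜 X W (Fin.tail xs))).comp
            ((continuousMultilinearCurryLeftEquiv 𝕜 (fun _ : Fin (N + 1) => X)
                W).toContinuousLinearEquiv :
              ContinuousMultilinearMap 𝕜 (fun _ : Fin (N + 1) => X) W ≃L[𝕜]
                (X →L[𝕜] ContinuousMultilinearMap 𝕜 (fun _ : Fin N => X) W)).toContinuousLinearMap)))

end

section Core2

open NormedSpace Filter Topology Metric

variable (𝕜 : Type*) [RCLike 𝕜] {X W : Type*} [NormedAddCommGroup X] [NormedSpace 𝕜 X]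
  [NormedAddCommGroup W] [NormedSpace 𝕜 W] {N : ℕ}

/-- The norm of the `N`-homogeneous polynomial associated to a continuous multilinear map,
i.e. the supremum of `‖Φ (x, …, x)‖` over the closed unit ball. -/
noncomputable def polyNorm (Φ : ContinuousMultilinearMap 𝕜 (fun _ : Fin N => X) W) : ℝ :=
  ⨆ x : Metric.closedBall (0 : X) 1, ‖Φ (fun _ => (x : X))‖

/-- A multilinear map is symmetric if it is invariant under permutation of its arguments. -/
def IsSymmetricMap (Φ : ContinuousMultilinearMap 𝕜 (fun _ : Fin N => X) W) : Prop :=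
  ∀ (σ : Equiv.Perm (Fin N)) (m : Fin N → X), Φ (fun i => m (σ i)) = Φ m

/-- The polynomial associated to `Φ` attains its norm on the closed unit ball. -/
def PolyNormAttaining (Φ : ContinuousMultilinearMap 𝕜 (fun _ : Fin N => X) W) : Prop :=
  ∃ a : X, ‖a‖ ≤ 1 ∧ ‖Φ (fun _ => a)‖ = polyNorm 𝕜 Φ

/-- The Aron–Berner extension of the polynomial associated to `Φ` attains its norm on the
closed unit ball of the bidual.  (Recall that the Aron–Berner extension has the same norm
as the polynomial itself.) -/
def ABNormAttaining (Φ : ContinuousMultilinearMap 𝕜 (fun _ : Fin N => X) W) : Prop :=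
  ∃ a'' : StrongDual 𝕜 (StrongDual 𝕜 X), ‖a''‖ ≤ 1 ∧
    ‖arens 𝕜 X W (fun _ => a'') Φ‖ = polyNorm 𝕜 Φ

/-- A normed space `E` has the approximation property if the identity map can be approximated,
uniformly on compact sets, by continuous finite-rank operators. -/
def HasApproximationProperty (E : Type*) [NormedAddCommGroup E] [NormedSpace 𝕜 E] : Prop :=
  ∀ K : Set E, IsCompact K → ∀ ε : ℝ, 0 < ε →
    ∃ T : E →L[𝕜] E, FiniteDimensional 𝕜 (LinearMap.range (T : E →ₗ[𝕜] E)) ∧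
      ∀ x ∈ K, ‖T x - x‖ ≤ ε

end Core2

/-!
Along the complex line `t ↦ a + t • eₙ` the polynomial `P` becomes an entire `Y`-valued function.
Its norm has a local maximum at `t = 0`, because `P` attains its norm at `a` and `a + t • eₙ`
stays in the unit ball for `|t| ≤ δ`. As `Y` is strictly convex, the maximum modulus principle
makes the function locally constant, hence constant by the identity theorem. Homogeneity then
gives `P(s • a + eₙ) = sᴺ P(a)` for `s ≠ 0`, and letting `s → 0` yields `P(eₙ) = 0`.
-/

open Filter Topology Metric

namespace ContinuousMultilinearMap

theorem norm_apply_diag_le_polyNorm {𝕜 X Y : Type*} [RCLike 𝕜] [NormedAddCommGroup X]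
    [NormedSpace 𝕜 X] [NormedAddCommGroup Y] [NormedSpace 𝕜 Y] {N : ℕ}
    (Φ : ContinuousMultilinearMap 𝕜 (fun _ : Fin N => X) Y) {x : X} (hx : ‖x‖ ≤ 1) :
    ‖Φ (fun _ => x)‖ ≤ polyNorm 𝕜 Φ := by
  have hbdd : BddAbove (Set.range fun y : closedBall (0 : X) 1 => ‖Φ (fun _ => (y : X))‖) := by
    refine ⟨‖Φ‖, ?_⟩
    rintro _ ⟨⟨y, hy⟩, rfl⟩
    exact Φ.unit_le_opNorm <| (pi_norm_le_iff_of_nonneg zero_le_one).2 fun _ =>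
      mem_closedBall_zero_iff.1 hy
  exact le_ciSup hbdd ⟨x, mem_closedBall_zero_iff.2 hx⟩

section NontriviallyNormedField

variable {𝕜 X Y : Type*} [NontriviallyNormedField 𝕜] [NormedAddCommGroup X] [NormedSpace 𝕜 X]
  [NormedAddCommGroup Y] [NormedSpace 𝕜 Y] {N : ℕ}
  (Φ : ContinuousMultilinearMap 𝕜 (fun _ : Fin N => X) Y)

theorem analyticOnNhd_apply_diag_add_smul (a e : X) :
    AnalyticOnNhd 𝕜 (fun t : 𝕜 => Φ (fun _ => a + t • e)) Set.univ := fun _ _ =>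
  Φ.analyticAt.comp <| analyticAt_pi_iff.2 fun _ =>
    analyticAt_const.add (analyticAt_id.smul analyticAt_const)

theorem apply_diag_eq_zero_of_forall_apply_diag_add_smul_eq (hN : 0 < N) {a e : X}
    (h : ∀ t : 𝕜, Φ (fun _ => a + t • e) = Φ (fun _ => a)) : Φ (fun _ => e) = 0 := by
  have hscaled : Set.EqOn (fun s : 𝕜 => Φ (fun _ => s • a + e))
      (fun s => s ^ N • Φ (fun _ => a)) {0}ᶜ := by
    intro s hs
    have hfactor : s • a + e = s • (a + s⁻¹ • e) := by
      rw [smul_add, smul_smul, mul_inv_cancel₀ hs, one_smul]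
    simp only [hfactor, Φ.map_smul_univ (fun _ => s), h, Finset.prod_const, Finset.card_univ,
      Fintype.card_fin]
  have hzero := hscaled.closure (by fun_prop) (by fun_prop) (by simp : (0 : 𝕜) ∈ closure {0}ᶜ)
  simpa [zero_pow hN.ne'] using hzero

end NontriviallyNormedField

theorem apply_diag_add_smul_eq_of_isLocalMax_norm {X Y : Type*} [NormedAddCommGroup X]
    [NormedSpace ℂ X] [NormedAddCommGroup Y] [NormedSpace ℂ Y] [StrictConvexSpace ℝ Y] {N : ℕ}
    (Φ : ContinuousMultilinearMap ℂ (fun _ : Fin N => X) Y) {a e : X}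
    (hmax : IsLocalMax (fun t : ℂ => ‖Φ (fun _ => a + t • e)‖) 0) (t : ℂ) :
    Φ (fun _ => a + t • e) = Φ (fun _ => a) := by
  have hanalytic := Φ.analyticOnNhd_apply_diag_add_smul a e
  have hlocal : ∀ᶠ s in 𝓝 (0 : ℂ), Φ (fun _ => a + s • e) = Φ (fun _ => a + (0 : ℂ) • e) :=
    Complex.eventually_eq_of_isLocalMax_norm
      (Eventually.of_forall fun s => (hanalytic s trivial).differentiableAt) hmax
  simpa using congrFun (hanalytic.eq_of_eventuallyEq analyticOnNhd_const hlocal) t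

end ContinuousMultilinearMap

theorem complex_poly_vanishes_on_unit_vectors_general
    (X : Type*) [NormedAddCommGroup X] [NormedSpace ℂ X]
    (en : ℕ → X)
    (Y : Type*) [NormedAddCommGroup Y] [NormedSpace ℂ Y]
    [StrictConvexSpace ℝ Y]
    (N : ℕ) (hN : 0 < N)
    (Φ : ContinuousMultilinearMap ℂ (fun _ : Fin N => X) Y)
    (a : X) (hattain : ‖Φ (fun _ => a)‖ = polyNorm ℂ Φ)
    (n₀ : ℕ) (δ : ℝ) (hδ : 0 < δ)
    (hext : ∀ lam : ℂ, ‖lam‖ ≤ δ → ∀ n, n₀ ≤ n → ‖a + lam • en n‖ ≤ 1) :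
    ∀ n, n₀ ≤ n → Φ (fun _ => en n) = 0 := by
  intro n hn
  refine Φ.apply_diag_eq_zero_of_forall_apply_diag_add_smul_eq hN (a := a)
    (Φ.apply_diag_add_smul_eq_of_isLocalMax_norm ?_)
  filter_upwards [closedBall_mem_nhds (0 : ℂ) hδ] with t ht
  simpa [hattain] using
    Φ.norm_apply_diag_le_polyNorm (hext t (mem_closedBall_zero_iff.1 ht) n hn)

/-- Lemma 3.2: over the complex scalars, if `X` is a Banach sequence space, `Y` is strictly
convex, and the `N`-homogeneous polynomial `P : X → Y` attains its norm at a point `a` of the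
unit ball satisfying the extremal condition (3.1) (`‖a + λ eₙ‖ ≤ 1` for all `|λ| ≤ δ`,
`n ≥ n₀`), then `P(eₙ) = 0` for all `n ≥ n₀`. -/
theorem complex_poly_vanishes_on_unit_vectors
    (X : Type*) [NormedAddCommGroup X] [NormedSpace ℂ X] [CompleteSpace X]
    (toSeq : X →ₗ[ℂ] (ℕ → ℂ)) (htoSeq : Function.Injective toSeq)
    (en : ℕ → X) (hen : ∀ n, toSeq (en n) = Pi.single n (1 : ℂ))
    (Y : Type*) [NormedAddCommGroup Y] [NormedSpace ℂ Y] [CompleteSpace Y]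
    [StrictConvexSpace ℝ Y]
    (N : ℕ) (hN : 0 < N)
    (Φ : ContinuousMultilinearMap ℂ (fun _ : Fin N => X) Y) (hΦ : IsSymmetricMap ℂ Φ)
    (a : X) (ha : ‖a‖ ≤ 1) (hattain : ‖Φ (fun _ => a)‖ = polyNorm ℂ Φ)
    (n₀ : ℕ) (δ : ℝ) (hδ : 0 < δ)
    (hext : ∀ lam : ℂ, ‖lam‖ ≤ δ → ∀ n, n₀ ≤ n → ‖a + lam • en n‖ ≤ 1) :
    ∀ n, n₀ ≤ n → Φ (fun _ => en n) = 0 :=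
  complex_poly_vanishes_on_unit_vectors_general X en Y N hN Φ a hattain n₀ δ hδ hext
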